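/- Let K = ℤ[x₁,x₂,…]/(xᵢxⱼ : i,j ≥ 1) be the quotient of the integral polynomial ring in countably many commuting variables by the ideal generated by all products of two variables, let A = K regarded as a K-algebra, and let B be the ideal of A generated by x₁. Then A is finitely presented as a K-algebra, A/B is a finitely presented K-module, B is finitely generated as a K-algebra, but B is not finitely presented as a K-algebra. -/

import Mathlib

/-- The free non-unital associative `K`-algebra on `X`: the semigroup algebra of the free
semigroup `X⁺` over `K`. -/
abbrev FreeNUAlg (K X : Type*) [CommRing K] : Type _ := MonoidAlgebra K (FreeSemigroup X)

/-- The two-sided ideal (as a `K`-submodule closed under left and right multiplication)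
generated by a set in a non-unital `K`-algebra. -/
def idealSpan (K : Type*) {A : Type*} [CommRing K] [NonUnitalRing A] [Module K A]
    (s : Set A) : Submodule K A :=
  sInf {J : Submodule K A | s ⊆ J ∧ ∀ a b : A, b ∈ J → a * b ∈ J ∧ b * a ∈ J}

/-- A non-unital `K`-algebra is finitely generated if some finite subset generates it as a
`K`-algebra. -/
def NUAlgFG (K A : Type*) [CommRing K] [NonUnitalRing A] [Module K A]
    [IsScalarTower K A A] [SMulCommClass K A A] : Prop :=
  ∃ s : Finset A, NonUnitalAlgebra.adjoin K (s : Set A) = ⊤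

/-- A non-unital `K`-algebra is finitely presented if it is isomorphic to the quotient of a
free algebra `K⟨X⟩` on a finite set `X` by a finitely generated two-sided ideal, i.e. there
is a surjection from some `K⟨X⟩`, `X` finite, whose kernel is a finitely generated
two-sided ideal. -/
def NUAlgFP (K A : Type*) [CommRing K] [NonUnitalRing A] [Module K A]
    [IsScalarTower K A A] [SMulCommClass K A A] : Prop :=
  ∃ (n : ℕ) (f : FreeNUAlg K (Fin n) →ₙₐ[K] A),
    Function.Surjective f ∧
      ∃ s : Finset (FreeNUAlg K (Fin n)),
        ∀ x, f x = 0 ↔ x ∈ idealSpan K (s : Set (FreeNUAlg K (Fin n)))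

/-- `K = ℤ[x₁,x₂,…]/(xᵢxⱼ : i,j)`: the integral polynomial ring in countably many
commuting variables modulo all products of two variables. -/
abbrev K17 : Type :=
  MvPolynomial ℕ ℤ ⧸ Ideal.span
    {p : MvPolynomial ℕ ℤ | ∃ i j : ℕ, p = MvPolynomial.X i * MvPolynomial.X j}

/-- The image of the variable `x₁` in `K17`. -/
noncomputable def x17 : K17 := Ideal.Quotient.mk _ (MvPolynomial.X 1)

/-- `B`: the ideal of `A = K17` generated by `x₁`, as a `K`-subalgebra of `K17`. -/
noncomputable def B17 : NonUnitalSubalgebra K17 K17 :=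
  (Ideal.span {x17} : Ideal K17).toNonUnitalSubalgebra
    (fun _ _ _ hy => Ideal.mul_mem_left _ _ hy)

/-!
`K` is presented by one generator `X` with `X² = X`, and `A/B = K/(x₁)` is the quotient of `K`
by a principal ideal. `B = K x₁` is generated by `x₁` and has zero multiplication, so an algebra
homomorphism onto `B` from a free algebra only sees the coefficients of the words of length
one; a finite presentation of `B` as an algebra therefore yields one as a `K`-module. As `B` is
cyclic with generator `x₁`, the annihilator of `x₁` would then be finitely generated. It is not:
it contains every `xⱼ`, whereas finitely many of its elements have zero constant term and
involve only finitely many variables, so for all but finitely many `j` they are killed by the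
substitution `xⱼ ↦ ε`, `xᵢ ↦ 0` (`i ≠ j`) into the dual numbers `ℤ[ε]`, which does not kill `xⱼ`.
-/

section IdealSpan

variable {K A : Type*} [CommRing K] [NonUnitalRing A] [Module K A]

theorem subset_idealSpan (s : Set A) : s ⊆ idealSpan K s := fun _ hx =>
  Submodule.mem_sInf.2 fun _ hJ => hJ.1 hx

theorem mul_mem_idealSpan_left {s : Set A} {b : A} (hb : b ∈ idealSpan K s) (a : A) :
    a * b ∈ idealSpan K s :=
  Submodule.mem_sInf.2 fun J hJ => (hJ.2 a b (Submodule.mem_sInf.1 hb J hJ)).1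

theorem idealSpan_le {s : Set A} {J : Submodule K A} (hs : s ⊆ J)
    (hJ : ∀ a b : A, b ∈ J → a * b ∈ J ∧ b * a ∈ J) : idealSpan K s ≤ J :=
  sInf_le ⟨hs, hJ⟩

end IdealSpan

theorem FreeSemigroup.mul_ne_of {X : Type*} (u v : FreeSemigroup X) (i : X) : u * v ≠ of i := by
  intro h
  have := congrArg FreeSemigroup.length h
  rw [length_mul, length_of] at this
  unfold FreeSemigroup.length at this
  omega

namespace FreeNUAlg

open MonoidAlgebra FreeSemigroup

variable {K X : Type*} [CommRing K]

theorem coeff_mul_of (a b : FreeNUAlg K X) (i : X) : (a * b).coeff (of i) = 0 :=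
  coeff_mul_antidiag a b (of i) ∅ fun {p} =>
    iff_of_false (Finset.notMem_empty p) (mul_ne_of _ _ _)

def linearPart : FreeNUAlg K X →ₗ[K] (X → K) where
  toFun p i := p.coeff (of i)
  map_add' _ _ := rfl
  map_smul' _ _ := rfl

@[simp]
theorem linearPart_apply (p : FreeNUAlg K X) (i : X) : linearPart p i = p.coeff (of i) := rfl

theorem linearPart_mul (a b : FreeNUAlg K X) : linearPart (a * b) = 0 :=
  funext (coeff_mul_of a b)

theorem linearPart_mem_span_of_mem_idealSpan {s : Set (FreeNUAlg K X)} {p : FreeNUAlg K X}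
    (hp : p ∈ idealSpan K s) : linearPart p ∈ Submodule.span K (linearPart '' s) := by
  refine idealSpan_le (J := (Submodule.span K (linearPart '' s)).comap linearPart)
    (fun q hq => Submodule.subset_span ⟨q, hq, rfl⟩) (fun a b _ => ?_) hp
  simp only [Submodule.mem_comap, linearPart_mul, zero_mem, and_self]

variable [DecidableEq X]

theorem linearPart_single_of (a : X) (k : K) : linearPart (single (of a) k) = Pi.single a k := by
  ext i
  by_cases h : i = a
  · subst h; simp
  · have : of a ≠ of i := fun h' => h (congrArg FreeSemigroup.head h').symm
    simp [h, Finsupp.single_eq_of_ne' this]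

variable [Fintype X]

theorem linearPart_sum_single_of (v : X → K) : linearPart (∑ i, single (of i) (v i)) = v := by
  simp [linearPart_single_of, Finset.univ_sum_single]

theorem map_eq_linearCombination_linearPart {A : Type*} [NonUnitalRing A] [Module K A]
    [IsScalarTower K A A] [SMulCommClass K A A] (hA : ∀ a b : A, a * b = 0)
    (f : FreeNUAlg K X →ₙₐ[K] A) (p : FreeNUAlg K X) :
    f p = Fintype.linearCombination K (fun i => f (single (of i) 1)) (linearPart p) := by
  induction p using MonoidAlgebra.induction_linear with
  | zero => simp
  | add p q hp hq => simp only [map_add, hp, hq]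
  | single w k =>
    induction w using FreeSemigroup.recOnMul with
    | ih1 a =>
      rw [linearPart_single_of, Fintype.linearCombination_apply_single, ← map_smul, smul_single',
        mul_one]
    | ih2 a y _ _ =>
      rw [← mul_one k, ← single_mul_single, map_mul, hA, linearPart_mul, map_zero]

end FreeNUAlg

open MonoidAlgebra FreeSemigroup in
theorem nuAlgFP_self (K : Type*) [CommRing K] : NUAlgFP K K := by
  let f : FreeNUAlg K (Fin 1) →ₙₐ[K] K :=
    liftMagma K ⟨fun _ => 1, fun _ _ => (mul_one 1).symm⟩
  have hf : ∀ w k, f (single w k) = k := fun w k => by simp [f]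
  let X : FreeNUAlg K (Fin 1) := single (of 0) 1
  let I := idealSpan K ({X * X - X} : Set (FreeNUAlg K (Fin 1)))
  have hword : ∀ w, single w 1 - X ∈ I := by
    intro w
    induction w using FreeSemigroup.recOnMul with
    | ih1 a => simp [Subsingleton.elim a 0, X]
    | ih2 a y _ ihy =>
      have : single (of a * y) (1 : K) - X = X * (single y 1 - X) + (X * X - X) := by
        rw [Subsingleton.elim a 0, mul_sub, single_mul_single, one_mul]
        abel
      rw [this]
      exact add_mem (mul_mem_idealSpan_left ihy X) (subset_idealSpan _ rfl)
  have hrem : ∀ p, p - single (of 0) (f p) ∈ I := by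
    intro p
    induction p using MonoidAlgebra.induction_linear with
    | zero => simp
    | add p q hp hq =>
      rw [map_add, single_add, add_sub_add_comm]
      exact add_mem hp hq
    | single w k =>
      rw [hf, ← mul_one k, ← smul_single', ← smul_single', ← smul_sub]
      exact I.smul_mem k (hword w)
  refine ⟨1, f, fun k => ⟨single (of 0) k, hf _ k⟩, {X * X - X},
    fun p => ⟨fun hp => ?_, fun hp => ?_⟩⟩
  · simpa [hp] using hrem p
  · refine idealSpan_le (J := LinearMap.ker (LinearMapClass.linearMap f)) ?_ (fun a b hb => ?_) hp
    · simp [X, hf]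
    · simp_all [LinearMap.mem_ker]

open MonoidAlgebra FreeSemigroup in
theorem NUAlgFP.finitePresentation_of_mul_eq_zero {K A : Type*} [CommRing K] [NonUnitalRing A]
    [Module K A] [IsScalarTower K A A] [SMulCommClass K A A] (hA : ∀ a b : A, a * b = 0)
    (h : NUAlgFP K A) : Module.FinitePresentation K A := by
  obtain ⟨n, f, hf, s, hker⟩ := h
  set L : FreeNUAlg K (Fin n) →ₗ[K] (Fin n → K) := FreeNUAlg.linearPart
  set g := Fintype.linearCombination K fun i => f (single (of i) 1)
  have hfg : ∀ p, f p = g (L p) := FreeNUAlg.map_eq_linearCombination_linearPart hA f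
  refine Module.finitePresentation_of_surjective g (fun a => ?_) ?_
  · obtain ⟨p, rfl⟩ := hf a
    exact ⟨_, (hfg p).symm⟩
  refine Submodule.fg_def.2 ⟨_, s.finite_toSet.image L, le_antisymm ?_ fun v hv => ?_⟩
  · rw [Submodule.span_le]
    rintro _ ⟨q, hq, rfl⟩
    rw [SetLike.mem_coe, LinearMap.mem_ker, ← hfg]
    exact (hker q).2 (subset_idealSpan _ hq)
  · rw [← FreeNUAlg.linearPart_sum_single_of v]
    refine FreeNUAlg.linearPart_mem_span_of_mem_idealSpan ((hker _).1 ?_)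
    rwa [hfg, FreeNUAlg.linearPart_sum_single_of]

theorem Module.finitePresentation_quotient {R M : Type*} [CommRing R] [AddCommGroup M]
    [Module R M] [Module.FinitePresentation R M] {N : Submodule R M} (hN : N.FG) :
    Module.FinitePresentation R (M ⧸ N) :=
  Module.finitePresentation_of_surjective N.mkQ N.mkQ_surjective (by rwa [Submodule.ker_mkQ])

theorem nuAlgFG_span_singleton {R : Type*} [CommRing R] (x : R) :
    NUAlgFG R
      ((Ideal.span {x}).toNonUnitalSubalgebra fun _ _ _ hy => Ideal.mul_mem_left _ _ hy) := by
  refine ⟨{⟨x, Ideal.mem_span_singleton_self x⟩}, eq_top_iff.2 fun ⟨b, hb⟩ _ => ?_⟩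
  obtain ⟨r, rfl⟩ := Ideal.mem_span_singleton'.1 hb
  exact SMulMemClass.smul_mem r (NonUnitalAlgebra.subset_adjoin R
    (Finset.mem_coe.2 (Finset.mem_singleton_self _)))

theorem MvPolynomial.map_eq_zero_of_mem_span_X_mul_X {σ R S : Type*} [CommRing R] [CommRing S]
    (f : MvPolynomial σ R →+* S) (hf : ∀ i j, f (X i) * f (X j) = 0) :
    ∀ p ∈ Ideal.span {p : MvPolynomial σ R | ∃ i j, p = X i * X j}, f p = 0 := fun p hp => by
  refine RingHom.mem_ker.1 ((Ideal.span_le (I := RingHom.ker f)).2 ?_ hp)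
  rintro _ ⟨i, j, rfl⟩
  rw [SetLike.mem_coe, RingHom.mem_ker, map_mul, hf]

namespace K17

open MvPolynomial DualNumber TrivSqZeroExt

noncomputable def var (i : ℕ) : K17 := Ideal.Quotient.mk _ (X i)

theorem var_mul_var (i j : ℕ) : var i * var j = 0 := by
  rw [var, var, ← map_mul, Ideal.Quotient.eq_zero_iff_mem]
  exact Ideal.subset_span ⟨i, j, rfl⟩

theorem x17_mul_x17 : x17 * x17 = 0 := var_mul_var 1 1

noncomputable def aug : K17 →+* ℤ :=
  Ideal.Quotient.lift _ constantCoeff (map_eq_zero_of_mem_span_X_mul_X _ fun i j => by simp)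

/-- Reads off the constant term and the coefficient of `xⱼ`. -/
noncomputable def evalDual (j : ℕ) : K17 →+* DualNumber ℤ :=
  Ideal.Quotient.lift _ (aeval (Pi.single j ε)).toRingHom
    (map_eq_zero_of_mem_span_X_mul_X _ fun i k => by
      by_cases hi : i = j <;> by_cases hk : k = j <;> simp [hi, hk])

theorem fst_evalDual (j : ℕ) (a : K17) : (evalDual j a).fst = aug a := by
  obtain ⟨p, rfl⟩ := Ideal.Quotient.mk_surjective a
  induction p using MvPolynomial.induction_on with
  | C n => simp [evalDual, aug]
  | add p q hp hq => simp_all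
  | mul_X p i hp => by_cases hi : i = j <;> simp_all [evalDual, aug]

theorem evalDual_var_self (j : ℕ) : evalDual j (var j) = ε := by
  simp [evalDual, var]

theorem aug_eq_zero_of_mul_x17_eq_zero {a : K17} (h : a * x17 = 0) : aug a = 0 := by
  have := congrArg (fun y => (evalDual 1 y).snd) h
  simpa [show x17 = var 1 from rfl, evalDual_var_self, ← fst_evalDual 1] using this

theorem eventually_evalDual_eq_zero {a : K17} (h : aug a = 0) :
    ∀ᶠ j in Filter.cofinite, evalDual j a = 0 := by
  obtain ⟨p, rfl⟩ := Ideal.Quotient.mk_surjective a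
  refine p.vars.finite_toSet.subset fun j hj => ?_
  by_contra hjp
  refine hj ?_
  have hvars : ∀ i ∈ p.vars, (Pi.single j ε : ℕ → DualNumber ℤ) i = 0 := fun i hi =>
    Pi.single_eq_of_ne (by rintro rfl; exact hjp hi) _
  simp only [aug, Ideal.Quotient.lift_mk] at h
  simp [evalDual, aeval_eq_constantCoeff_of_vars hvars, h]

theorem not_fg_torsionOf_x17 : ¬ (Ideal.torsionOf K17 K17 x17).FG := by
  rintro ⟨S, hS⟩
  have hS0 : ∀ s ∈ S, aug s = 0 := fun s hs => by
    have : s ∈ Ideal.torsionOf K17 K17 x17 := hS ▸ Submodule.subset_span hs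
    exact aug_eq_zero_of_mul_x17_eq_zero this
  obtain ⟨j, hj⟩ := ((Filter.eventually_all_finset S).2 fun s hs =>
    eventually_evalDual_eq_zero (hS0 s hs)).exists
  have hle : Ideal.torsionOf K17 K17 x17 ≤ RingHom.ker (evalDual j) := by
    rw [← hS]
    exact Ideal.span_le.2 hj
  have := hle (show var j ∈ Ideal.torsionOf K17 K17 x17 from var_mul_var j 1)
  rw [RingHom.mem_ker, evalDual_var_self] at this
  simpa using congrArg snd this

end K17

theorem B17_mul_eq_zero (a b : B17) : a * b = 0 := by
  obtain ⟨r, hr⟩ := Ideal.mem_span_singleton'.1 a.2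
  obtain ⟨t, ht⟩ := Ideal.mem_span_singleton'.1 b.2
  ext
  calc (a * b : K17) = r * t * (x17 * x17) := by rw [← hr, ← ht]; ring
    _ = 0 := by rw [K17.x17_mul_x17, mul_zero]

theorem not_nuAlgFP_B17 : ¬ NUAlgFP K17 B17 := by
  intro h
  have := h.finitePresentation_of_mul_eq_zero B17_mul_eq_zero
  let x : B17 := ⟨x17, Ideal.mem_span_singleton_self x17⟩
  have hsurj : Function.Surjective (LinearMap.toSpanSingleton K17 B17 x) := fun b => by
    obtain ⟨r, hr⟩ := Ideal.mem_span_singleton'.1 b.2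
    exact ⟨r, Subtype.ext hr⟩
  have hfg := Module.FinitePresentation.fg_ker (R := K17) (M := K17) (N := B17) _ hsurj
  have hker : LinearMap.ker (LinearMap.toSpanSingleton K17 B17 x) =
      Ideal.torsionOf K17 K17 x17 := by
    ext r
    simp [x, Subtype.ext_iff]
  exact K17.not_fg_torsionOf_x17 (hker ▸ hfg)

/-- Let `K = ℤ[x₁,x₂,…]/(xᵢxⱼ : i,j ≥ 1)`, let `A = K` regarded as a
`K`-algebra, and let `B` be the ideal of `A` generated by `x₁`. Then `A` is finitely
presented as a `K`-algebra, `A/B` is a finitely presented `K`-module, `B` is finitely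
generated as a `K`-algebra, but `B` is not finitely presented as a `K`-algebra. -/
theorem example17 :
    NUAlgFP K17 K17 ∧
    Module.FinitePresentation K17 (K17 ⧸ B17.toSubmodule) ∧
    NUAlgFG K17 B17 ∧
    ¬ NUAlgFP K17 B17 :=
  ⟨nuAlgFP_self K17, Module.finitePresentation_quotient (Submodule.fg_span_singleton x17),
    nuAlgFG_span_singleton x17, not_nuAlgFP_B17⟩
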